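/- For all natural numbers n, k and every natural number m ≥ 1: S^{c,d}_{s,q}[n+m, k] = Σ_{r=0}^{n} Σ_{j=0}^{m} S^{c,d}_{s,q}[m,j] · q^{r(d + mc + (m−j)(s−1))} · binom(n,r)_{q^{c+s−1}} · S^{c,0}_{s,q}[r, k−j] · Π_{i=0}^{n−r−1} [d + mc + (m−j)(s−1) + (c+s−1)·i]_q, where S^{c,0}_{s,q}[r, k−j] is interpreted as 0 when j > k. -/

import Mathlib

/-!
Write `B = c + s - 1`. For a fixed `a`, the `q`-binomial transform
`F(n, k) = ∑ᵣ q^{ra} [n, r]_{q^B} T(r, k) ∏_{i < n - r} [a + B i]_q`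
turns a recurrence `T(r+1, k+1) = q^{x + Br} T(r, k) + [y + Br]_q T(r, k+1)` into
`F(n+1, k+1) = q^{a + x + Bn} F(n, k) + [a + y + Bn]_q F(n, k+1)`; termwise this is the identity
`[u + v]_q = q^u [v]_q + [u]_q` combined with `q`-Pascal. The numbers `S^{c,0}[r, k - j]`, shifted
by `j`, satisfy such a recurrence, and for `a = d + mc + (m - j)(s - 1)` the transformed recurrence
is exactly the recurrence of `S^{c,d}[n + m, k]` in `n`. Hence both sides of the identity satisfy
the same recurrence; they agree at `n = 0` and vanish at `k = 0` (the right side because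
`S^{c,d}[m, 0] = 0` for `m ≥ 1`), so induction on `n` concludes.
-/

noncomputable def qBracket (q t : ℝ) : ℝ := (q ^ t - 1) / (q - 1)

open Classical in
noncomputable def qBinom (Q : ℝ) (n k : ℕ) : ℝ :=
  if k ≤ n then
    ∑ f ∈ Finset.univ.filter (fun f : Fin (n - k) → Fin (k + 1) => Monotone f),
      Q ^ (∑ i, (f i : ℕ))
  else 0

noncomputable def genStirlingCD (c d s q : ℝ) : ℕ → ℕ → ℝ
  | 0, 0 => 1
  | 0, _ + 1 => 0
  | _ + 1, 0 => 0
  | n + 1, k + 1 =>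
    if k + 1 ≤ n + 1 then
      q ^ (c * (n : ℝ) + d + ((n : ℝ) - (k : ℝ)) * (s - 1)) * genStirlingCD c d s q n k
        + qBracket q (c * (n : ℝ) + d + ((n : ℝ) - (k : ℝ) - 1) * (s - 1)) *
            genStirlingCD c d s q n (k + 1)
    else 0

open Finset

theorem qBracket_zero (q : ℝ) : qBracket q 0 = 0 := by
  simp [qBracket]

theorem qBracket_add {q : ℝ} (hq : 0 < q) (x y : ℝ) :
    qBracket q (x + y) = q ^ x * qBracket q y + qBracket q x := by
  simp only [qBracket, Real.rpow_add hq]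
  ring

open Classical in
noncomputable def sumMonotonePow (Q : ℝ) (N k : ℕ) : ℝ :=
  ∑ f ∈ univ.filter (fun f : Fin N → Fin (k + 1) => Monotone f), Q ^ (∑ i, (f i : ℕ))

theorem qBinom_of_le (Q : ℝ) {n k : ℕ} (h : k ≤ n) :
    qBinom Q n k = sumMonotonePow Q (n - k) k := by
  rw [qBinom, if_pos h, sumMonotonePow]

theorem qBinom_of_lt (Q : ℝ) {n k : ℕ} (h : n < k) : qBinom Q n k = 0 := by
  rw [qBinom, if_neg h.not_ge]

theorem sumMonotonePow_zero_left (Q : ℝ) (k : ℕ) : sumMonotonePow Q 0 k = 1 := by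
  rw [sumMonotonePow, filter_true_of_mem fun f _ a => a.elim0]
  simp

theorem sumMonotonePow_zero_right (Q : ℝ) (N : ℕ) : sumMonotonePow Q N 0 = 1 := by
  rw [sumMonotonePow, filter_true_of_mem fun f _ a b _ => Fin.le_def.mpr (by omega)]
  simp

theorem monotone_cons_zero {N k : ℕ} {g : Fin N → Fin (k + 1)} (hg : Monotone g) :
    Monotone (Fin.cons 0 g : Fin (N + 1) → Fin (k + 1)) := by
  intro a b hab
  induction a using Fin.cases with
  | zero => exact Fin.zero_le _
  | succ a =>
    induction b using Fin.cases with
    | zero => exact absurd (Fin.le_zero_iff.mp hab) (Fin.succ_ne_zero a)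
    | succ b => exact hg (Fin.succ_le_succ_iff.mp hab)

theorem succ_comp_predAbove_zero_comp {N k : ℕ} {f : Fin (N + 1) → Fin (k + 2)}
    (hf : Monotone f) (h0 : f 0 ≠ 0) : Fin.succ ∘ Fin.predAbove 0 ∘ f = f := by
  funext i
  exact Fin.succ_predAbove_zero fun hi => h0 (Fin.le_zero_iff.mp (hi ▸ hf (Fin.zero_le i)))

theorem sumMonotonePow_succ_succ (Q : ℝ) (N k : ℕ) :
    sumMonotonePow Q (N + 1) (k + 1)
      = Q ^ (N + 1) * sumMonotonePow Q (N + 1) k + sumMonotonePow Q N (k + 1) := by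
  classical
  simp only [sumMonotonePow]
  -- a monotone `f` with `f 0 ≠ 0` is `Fin.succ ∘ g`; one with `f 0 = 0` is `Fin.cons 0 g`
  rw [← sum_filter_not_add_sum_filter _ (fun f => f 0 = 0), mul_sum]
  congr 1
  · refine sum_nbij' (fun f => Fin.predAbove 0 ∘ f) (fun g => Fin.succ ∘ g) ?_ ?_ ?_ ?_ ?_
      <;> simp only [mem_filter, mem_univ, true_and]
    · exact fun f hf => (Fin.predAbove_right_monotone 0).comp hf.1
    · exact fun g hg => ⟨Fin.strictMono_succ.monotone.comp hg, Fin.succ_ne_zero _⟩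
    · exact fun f hf => succ_comp_predAbove_zero_comp hf.1 hf.2
    · exact fun g _ => funext fun _ => Fin.predAbove_zero_succ
    · intro f hf
      conv_lhs => rw [← succ_comp_predAbove_zero_comp hf.1 hf.2]
      simp [sum_add_distrib, pow_add, mul_comm]
  · refine sum_nbij' Fin.tail (fun g => (Fin.cons 0 g : Fin (N + 1) → Fin (k + 2)))
      ?_ ?_ ?_ ?_ ?_
      <;> simp only [mem_filter, mem_univ, true_and]
    · exact fun f hf => hf.1.comp Fin.strictMono_succ.monotone
    · exact fun g hg => ⟨monotone_cons_zero hg, rfl⟩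
    · exact fun f hf => hf.2 ▸ Fin.cons_self_tail f
    · exact fun g _ => Fin.tail_cons _ _
    · intro f hf
      simp [Fin.sum_univ_succ, hf.2, Fin.tail]

theorem qBinom_zero_right (Q : ℝ) (n : ℕ) : qBinom Q n 0 = 1 := by
  rw [qBinom_of_le Q n.zero_le, sumMonotonePow_zero_right]

theorem qBinom_succ_succ (Q : ℝ) (n r : ℕ) :
    qBinom Q (n + 1) (r + 1) = Q ^ (n - r) * qBinom Q n r + qBinom Q n (r + 1) := by
  rcases lt_trichotomy r n with h | rfl | h
  · obtain ⟨t, rfl⟩ := Nat.exists_eq_add_of_lt h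
    rw [qBinom_of_le Q (by omega : r + 1 ≤ r + t + 1 + 1),
      qBinom_of_le Q (by omega : r ≤ r + t + 1), qBinom_of_le Q (by omega : r + 1 ≤ r + t + 1),
      show r + t + 1 + 1 - (r + 1) = t + 1 by omega, show r + t + 1 - r = t + 1 by omega,
      show r + t + 1 - (r + 1) = t by omega]
    exact sumMonotonePow_succ_succ Q t r
  · simp [qBinom_of_le, qBinom_of_lt, sumMonotonePow_zero_left]
  · simp [qBinom_of_lt, h, h.trans r.lt_succ_self]

noncomputable def qBracketProd (q a B : ℝ) (l : ℕ) : ℝ :=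
  ∏ i ∈ range l, qBracket q (a + B * i)

noncomputable def qBinomTransform (q a B : ℝ) (T : ℕ → ℕ → ℝ) (n k : ℕ) : ℝ :=
  ∑ r ∈ range (n + 1),
    q ^ ((r : ℝ) * a) * qBinom (q ^ B) n r * T r k * qBracketProd q a B (n - r)

section Transform

variable {q a B : ℝ} {T : ℕ → ℕ → ℝ}

theorem qBracketProd_succ (l : ℕ) :
    qBracketProd q a B (l + 1) = qBracketProd q a B l * qBracket q (a + B * l) :=
  prod_range_succ _ _

theorem qBinomTransform_zero_left (k : ℕ) :
    qBinomTransform q a B T 0 k = T 0 k := by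
  simp [qBinomTransform, qBracketProd, qBinom_zero_right]

theorem qBinomTransform_eq_zero {k : ℕ} (hT : ∀ r, T r k = 0) (n : ℕ) :
    qBinomTransform q a B T n k = 0 :=
  sum_eq_zero fun r _ => by rw [hT, mul_zero, zero_mul]

variable {k : ℕ} {x y : ℝ}

theorem qBinomTransform_summand_succ_succ (hq : 0 < q)
    (hT : ∀ r, T (r + 1) (k + 1) = q ^ (x + B * r) * T r k + qBracket q (y + B * r) * T r (k + 1))
    (β : ℝ) (r t : ℕ) :
    q ^ (a + x + B * (r + t : ℕ)) * (q ^ ((r : ℝ) * a) * β * T r k * qBracketProd q a B t)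
      + qBracket q (a + y + B * (r + t : ℕ))
        * (q ^ ((r : ℝ) * a) * β * T r (k + 1) * qBracketProd q a B t)
    = q ^ (((r + 1 : ℕ) : ℝ) * a) * ((q ^ B) ^ t * β) * T (r + 1) (k + 1)
        * qBracketProd q a B t
      + q ^ ((r : ℝ) * a) * β * T r (k + 1) * qBracketProd q a B (t + 1) := by
  have hx : q ^ (a + x + B * (r + t : ℕ)) = q ^ (a + B * t) * q ^ (x + B * r) := by
    rw [← Real.rpow_add hq]; push_cast; ring_nf
  have hy : qBracket q (a + y + B * (r + t : ℕ))
      = q ^ (a + B * t) * qBracket q (y + B * r) + qBracket q (a + B * t) := by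
    rw [← qBracket_add hq]; push_cast; ring_nf
  have hpow :
      q ^ (((r + 1 : ℕ) : ℝ) * a) * (q ^ B) ^ t = q ^ ((r : ℝ) * a) * q ^ (a + B * t) := by
    rw [← Real.rpow_mul_natCast hq.le, ← Real.rpow_add hq, ← Real.rpow_add hq]
    push_cast; ring_nf
  rw [hx, hy, hT, qBracketProd_succ]
  linear_combination (-β * qBracketProd q a B t *
    (q ^ (x + B * r) * T r k + qBracket q (y + B * r) * T r (k + 1))) * hpow

theorem qBinomTransform_succ_succ (hq : 0 < q)
    (hT : ∀ r, T (r + 1) (k + 1) = q ^ (x + B * r) * T r k + qBracket q (y + B * r) * T r (k + 1))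
    (n : ℕ) :
    qBinomTransform q a B T (n + 1) (k + 1)
      = q ^ (a + x + B * n) * qBinomTransform q a B T n k
        + qBracket q (a + y + B * n) * qBinomTransform q a B T n (k + 1) := by
  set X : ℕ → ℝ := fun r => q ^ (((r + 1 : ℕ) : ℝ) * a)
    * ((q ^ B) ^ (n - r) * qBinom (q ^ B) n r) * T (r + 1) (k + 1) * qBracketProd q a B (n - r)
  set Y : ℕ → ℝ := fun r =>
    q ^ ((r : ℝ) * a) * qBinom (q ^ B) n r * T r (k + 1) * qBracketProd q a B (n + 1 - r)
  have hterm : ∀ r ∈ range (n + 1),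
      q ^ (a + x + B * n)
          * (q ^ ((r : ℝ) * a) * qBinom (q ^ B) n r * T r k * qBracketProd q a B (n - r))
        + qBracket q (a + y + B * n)
          * (q ^ ((r : ℝ) * a) * qBinom (q ^ B) n r * T r (k + 1) * qBracketProd q a B (n - r))
      = X r + Y r := by
    intro r hr
    obtain ⟨t, rfl⟩ := Nat.exists_eq_add_of_le (Nat.lt_succ_iff.mp (mem_range.mp hr))
    simp only [X, Y, Nat.add_sub_cancel_left, show r + t + 1 - r = t + 1 by omega]
    exact qBinomTransform_summand_succ_succ hq hT _ r t
  have hY : ∑ r ∈ range (n + 2), Y r = ∑ r ∈ range (n + 1), Y r := by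
    simp [Y, sum_range_succ, qBinom_of_lt _ n.lt_succ_self]
  simp only [qBinomTransform, mul_sum, ← sum_add_distrib]
  rw [sum_congr rfl hterm, sum_add_distrib, ← hY, sum_range_succ' _ (n + 1),
    sum_range_succ' Y, ← add_assoc, ← sum_add_distrib]
  congr 1
  · refine sum_congr rfl fun r _ => ?_
    simp only [X, Y, qBinom_succ_succ, Nat.add_sub_add_right]
    ring
  · simp [Y, qBinom_zero_right]

end Transform

section Stirling

variable (c d s q : ℝ)

theorem genStirlingCD_of_lt {n k : ℕ} (h : n < k) : genStirlingCD c d s q n k = 0 := by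
  match n, k, h with
  | 0, _ + 1, _ => rfl
  | _ + 1, _ + 1, h => rw [genStirlingCD, if_neg h.not_ge]

theorem genStirlingCD_succ_succ (n k : ℕ) :
    genStirlingCD c d s q (n + 1) (k + 1)
      = q ^ (c * n + d + ((n : ℝ) - k) * (s - 1)) * genStirlingCD c d s q n k
        + qBracket q (c * n + d + ((n : ℝ) - k - 1) * (s - 1))
          * genStirlingCD c d s q n (k + 1) := by
  rcases le_or_gt k n with h | h
  · rw [genStirlingCD, if_pos (Nat.succ_le_succ h)]
  · rw [genStirlingCD_of_lt _ _ _ _ (Nat.succ_lt_succ h), genStirlingCD_of_lt _ _ _ _ h,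
      genStirlingCD_of_lt _ _ _ _ (h.trans k.lt_succ_self)]
    ring

theorem genStirlingCD_succ_zero (n : ℕ) : genStirlingCD c d s q (n + 1) 0 = 0 := rfl

noncomputable def shiftedStirling (j : ℕ) (r k : ℕ) : ℝ :=
  if j ≤ k then genStirlingCD c 0 s q r (k - j) else 0

theorem shiftedStirling_zero_left (j k : ℕ) :
    shiftedStirling c s q j 0 k = if j = k then 1 else 0 := by
  unfold shiftedStirling
  rcases lt_trichotomy j k with h | rfl | h
  · obtain ⟨t, rfl⟩ := Nat.exists_eq_add_of_lt h
    rw [if_pos h.le, if_neg h.ne, show j + t + 1 - j = t + 1 by omega]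
    rfl
  · simp only [le_refl, if_true, Nat.sub_self]
    rfl
  · rw [if_neg h.not_ge, if_neg h.ne']

theorem shiftedStirling_zero_right {j : ℕ} (hj : 0 < j) (r : ℕ) :
    shiftedStirling c s q j r 0 = 0 := by
  simp [shiftedStirling, hj.ne']

theorem shiftedStirling_succ_succ (j k r : ℕ) :
    shiftedStirling c s q j (r + 1) (k + 1)
      = q ^ (((j : ℝ) - k) * (s - 1) + (c + s - 1) * r) * shiftedStirling c s q j r k
        + qBracket q (((j : ℝ) - k - 1) * (s - 1) + (c + s - 1) * r)
          * shiftedStirling c s q j r (k + 1) := by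
  unfold shiftedStirling
  rcases lt_trichotomy j (k + 1) with h | rfl | h
  · obtain ⟨t, rfl⟩ := Nat.exists_eq_add_of_le (Nat.lt_succ_iff.mp h)
    simp only [le_add_iff_nonneg_right, zero_le, if_true, show j + t + 1 = j + (t + 1) by omega,
      Nat.add_sub_cancel_left, genStirlingCD_succ_succ]
    push_cast
    ring_nf
  · rcases r with _ | r <;> simp [genStirlingCD_succ_zero, qBracket_zero]
  · simp [h.not_ge, (k.lt_succ_self.trans h).not_ge]

end Stirling

theorem genStirlingCD_add_eq_sum_qBinomTransform {q : ℝ} (hq : 0 < q) (s c d : ℝ) {m : ℕ}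
    (hm : 1 ≤ m) (n k : ℕ) :
    genStirlingCD c d s q (n + m) k
      = ∑ j ∈ range (m + 1), genStirlingCD c d s q m j *
          qBinomTransform q (d + m * c + ((m : ℝ) - j) * (s - 1)) (c + s - 1)
            (shiftedStirling c s q j) n k := by
  induction n generalizing k with
  | zero =>
    simp only [zero_add, qBinomTransform_zero_left, shiftedStirling_zero_left, mul_ite, mul_one,
      mul_zero, sum_ite_eq', mem_range]
    split_ifs with hk
    · rfl
    · exact genStirlingCD_of_lt c d s q (by omega)
  | succ n ih =>
    rw [show n + 1 + m = n + m + 1 by omega]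
    rcases k with _ | k
    · refine (sum_eq_zero fun j _ => ?_).symm
      rcases Nat.eq_zero_or_pos j with rfl | hj
      · obtain ⟨m, rfl⟩ := Nat.exists_eq_add_of_le' hm
        rw [genStirlingCD_succ_zero, zero_mul]
      · rw [qBinomTransform_eq_zero (shiftedStirling_zero_right c s q hj), mul_zero]
    · rw [genStirlingCD_succ_succ, ih, ih, mul_sum, mul_sum, ← sum_add_distrib]
      refine sum_congr rfl fun j _ => ?_
      rw [qBinomTransform_succ_succ hq (shiftedStirling_succ_succ c s q j k)]
      push_cast
      ring_nf

theorem spivey_cd_first_general (q s c d : ℝ) (hq : 0 < q) (n k m : ℕ) (hm : 1 ≤ m) :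
    genStirlingCD c d s q (n + m) k
    = ∑ r ∈ Finset.range (n + 1), ∑ j ∈ Finset.range (m + 1),
        genStirlingCD c d s q m j *
          q ^ ((r : ℝ) * (d + (m : ℝ) * c + ((m : ℝ) - (j : ℝ)) * (s - 1))) *
          qBinom (q ^ (c + s - 1)) n r *
          (if j ≤ k then genStirlingCD c 0 s q r (k - j) else 0) *
          ∏ i ∈ Finset.range (n - r),
            qBracket q (d + (m : ℝ) * c + ((m : ℝ) - (j : ℝ)) * (s - 1)
              + (c + s - 1) * (i : ℝ)) := by
  rw [genStirlingCD_add_eq_sum_qBinomTransform hq s c d hm, sum_comm]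
  refine sum_congr rfl fun j _ => ?_
  rw [qBinomTransform, mul_sum]
  refine sum_congr rfl fun r _ => ?_
  rw [shiftedStirling, qBracketProd]
  ring

/-- Spivey-type convolution for the numbers `S^{c,d}_{s,q}[n,k]`, first form. -/
theorem spivey_cd_first (q s c d : ℝ) (hq : 0 < q) (hq1 : q ≠ 1) (n k m : ℕ) (hm : 1 ≤ m) :
    genStirlingCD c d s q (n + m) k
    = ∑ r ∈ Finset.range (n + 1), ∑ j ∈ Finset.range (m + 1),
        genStirlingCD c d s q m j *
          q ^ ((r : ℝ) * (d + (m : ℝ) * c + ((m : ℝ) - (j : ℝ)) * (s - 1))) *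
          qBinom (q ^ (c + s - 1)) n r *
          (if j ≤ k then genStirlingCD c 0 s q r (k - j) else 0) *
          ∏ i ∈ Finset.range (n - r),
            qBracket q (d + (m : ℝ) * c + ((m : ℝ) - (j : ℝ)) * (s - 1)
              + (c + s - 1) * (i : ℝ)) :=
  spivey_cd_first_general q s c d hq n k m hm
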